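/- arXiv:2111.01925 — 2 statements merged into one kernel-verified Lean document; each statement's English description precedes it below -/
import Mathlib

section
/- Every attractor of a system of n weak contractions on [0,1]^d is a Hausdorff-metric limit of attractors of IFSs of n (genuine) contractions on [0,1]^d, i.e., wL_n^d ⊆ cl(L_n^d). -/
open Metric Set Topology Filter TopologicalSpace

noncomputable section

/-- The unit cube `[0,1]^d` with the Euclidean metric. -/
abbrev unitCube (d : ℕ) : Type :=
  {x : EuclideanSpace ℝ (Fin d) // ∀ i, x i ∈ Set.Icc (0:ℝ) 1}

/-- A contraction: a Lipschitz map with constant `< 1`. -/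
def IsContraction {X : Type*} [MetricSpace X] (f : X → X) : Prop :=
  ∃ L : NNReal, L < 1 ∧ LipschitzWith L f

/-- A weak contraction: `d(f x, f y) < d(x, y)` for `x ≠ y`. -/
def IsWeakContraction {X : Type*} [MetricSpace X] (f : X → X) : Prop :=
  ∀ x y, x ≠ y → dist (f x) (f y) < dist x y

/-- `Ld n d`: attractors of IFSs of `n` contractions on `[0,1]^d`,
as a subset of the hyperspace of nonempty compact sets. -/
def Ld (n d : ℕ) : Set (NonemptyCompacts (unitCube d)) :=
  {A | ∃ f : Fin n → unitCube d → unitCube d,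
    (∀ i, IsContraction (f i)) ∧
      (A : Set (unitCube d)) = ⋃ i, f i '' (A : Set (unitCube d))}

/-- `wLd n d`: attractors of systems of `n` weak contractions on `[0,1]^d`. -/
def wLd (n d : ℕ) : Set (NonemptyCompacts (unitCube d)) :=
  {A | ∃ f : Fin n → unitCube d → unitCube d,
    (∀ i, IsWeakContraction (f i)) ∧
      (A : Set (unitCube d)) = ⋃ i, f i '' (A : Set (unitCube d))}

def IFSd (d : ℕ) : Set (NonemptyCompacts (unitCube d)) := ⋃ n, Ld n d

def wIFSd (d : ℕ) : Set (NonemptyCompacts (unitCube d)) := ⋃ n, wLd n d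

/-- The embedding `[0,1] → [0,1]^d`, `a ↦ (a,0,…,0)`. -/
def emb (d : ℕ) (hd : 0 < d) (x : unitCube 1) : unitCube d :=
  ⟨(WithLp.toLp 2 (fun i => if i = (⟨0, hd⟩ : Fin d) then x.1 0 else 0) : EuclideanSpace ℝ (Fin d)),
    fun i => by
      dsimp only
      split_ifs
      · exact x.2 0
      · exact ⟨le_refl 0, zero_le_one⟩⟩

/-- The projection `[0,1]^d → [0,1]` onto the first coordinate. -/
def projL (d : ℕ) (hd : 0 < d) (x : unitCube d) : unitCube 1 :=
  ⟨(WithLp.toLp 2 (fun _ => x.1 ⟨0, hd⟩) : EuclideanSpace ℝ (Fin 1)), fun _ => x.2 ⟨0, hd⟩⟩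

/-! Composing the weak contractions `fᵢ` with a contraction `c` uniformly close to the identity
(on the cube, a homothety `x ↦ t • x` with `t < 1`) gives contractions whose Hutchinson operator
is uniformly close to the Hutchinson operator `F` of the `fᵢ`, so the attractors of the new
systems are approximate fixed points of `F`. Since `F` is a
weak contraction of the compact hyperspace, its fixed point `A` is unique, and by compactness
approximate fixed points of `F` are close to `A`. -/

namespace IsWeakContraction

variable {X : Type*} [MetricSpace X] {f : X → X}

lemma lipschitzWith_one (hf : IsWeakContraction f) : LipschitzWith 1 f :=
  LipschitzWith.of_dist_le_mul fun x y => by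
    rcases eq_or_ne x y with rfl | hxy
    · simp
    · simpa using (hf x y hxy).le

lemma eq_of_isFixedPt (hf : IsWeakContraction f) {x y : X} (hx : Function.IsFixedPt f x)
    (hy : Function.IsFixedPt f y) : x = y := by
  by_contra hxy
  simpa [hx.eq, hy.eq] using hf x y hxy

lemma infDist_image_lt (hf : IsWeakContraction f) {s : Set X} (hs : IsCompact s)
    (hne : s.Nonempty) {x : X} {r : ℝ} (hr : 0 < r) (hx : infDist x s ≤ r) :
    infDist (f x) (f '' s) < r := by
  obtain ⟨y, hy, hxy⟩ := hs.exists_infDist_eq_dist hne x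
  rcases eq_or_ne x y with rfl | hne'
  · rwa [infDist_zero_of_mem (mem_image_of_mem f hy)]
  · calc infDist (f x) (f '' s) ≤ dist (f x) (f y) :=
          infDist_le_dist_of_mem (mem_image_of_mem f hy)
      _ < dist x y := hf x y hne'
      _ = infDist x s := hxy.symm
      _ ≤ r := hx

end IsWeakContraction

lemma exists_pos_forall_dist_lt_of_dist_apply_lt {Y : Type*} [MetricSpace Y] [CompactSpace Y]
    {F : Y → Y} (hF : Continuous F) {a : Y} (ha : ∀ y, Function.IsFixedPt F y → y = a)
    {ε : ℝ} (hε : 0 < ε) : ∃ δ > 0, ∀ y, dist y (F y) < δ → dist y a < ε := by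
  set S := {y | ε ≤ dist y a}
  have hS : IsCompact S :=
    (isClosed_le continuous_const (continuous_id.dist continuous_const)).isCompact
  rcases S.eq_empty_or_nonempty with hS0 | hSne
  · exact ⟨1, one_pos, fun y _ => not_le.1 fun hy => hS0.subset hy⟩
  obtain ⟨y₀, hy₀, hmin⟩ := hS.exists_isMinOn hSne (continuous_id.dist hF).continuousOn
  have hy₀a : y₀ ≠ a := by
    rintro rfl
    exact (dist_self y₀ ▸ hy₀ : ε ≤ 0).not_gt hε
  refine ⟨dist y₀ (F y₀), dist_pos.2 fun h => hy₀a (ha y₀ h.symm), fun y hy => ?_⟩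
  by_contra! hya
  exact (hmin hya).not_gt hy

lemma hausdorffDist_lt_of_forall_infDist_lt {X : Type*} [MetricSpace X] {s t : Set X}
    (hs : IsCompact s) (hsne : s.Nonempty) (ht : IsCompact t) (htne : t.Nonempty) {r : ℝ}
    (hst : ∀ x ∈ s, infDist x t < r) (hts : ∀ y ∈ t, infDist y s < r) :
    hausdorffDist s t < r := by
  obtain ⟨x₀, hx₀, hxmax⟩ := hs.exists_isMaxOn hsne (continuous_infDist_pt t).continuousOn
  obtain ⟨y₀, hy₀, hymax⟩ := ht.exists_isMaxOn htne (continuous_infDist_pt s).continuousOn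
  calc hausdorffDist s t ≤ max (infDist x₀ t) (infDist y₀ s) :=
        hausdorffDist_le_of_infDist (le_max_of_le_left infDist_nonneg)
          (fun x hx => le_max_of_le_left (hxmax hx)) (fun y hy => le_max_of_le_right (hymax hy))
    _ < r := max_lt (hst x₀ hx₀) (hts y₀ hy₀)

section Hutchinson

variable {X : Type*} [MetricSpace X] {ι : Type*} [Finite ι]

def hutchinson [Nonempty ι] (f : ι → X → X) (hf : ∀ i, Continuous (f i))
    (K : NonemptyCompacts X) : NonemptyCompacts X :=
  ⟨⟨⋃ i, f i '' K, isCompact_iUnion fun i => K.isCompact.image (hf i)⟩,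
    nonempty_iUnion.2 ⟨Classical.arbitrary ι, K.nonempty.image _⟩⟩

variable [Nonempty ι] {f g : ι → X → X}

@[simp]
lemma coe_hutchinson (hf : ∀ i, Continuous (f i)) (K : NonemptyCompacts X) :
    (hutchinson f hf K : Set X) = ⋃ i, f i '' K :=
  rfl

lemma mem_hutchinson {hf : ∀ i, Continuous (f i)} {K : NonemptyCompacts X} {z : X} :
    z ∈ hutchinson f hf K ↔ ∃ i, ∃ x ∈ K, f i x = z := by
  simp [← SetLike.mem_coe]

lemma hutchinson_eq_self_iff {hf : ∀ i, Continuous (f i)} {K : NonemptyCompacts X} :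
    hutchinson f hf K = K ↔ (K : Set X) = ⋃ i, f i '' K := by
  rw [← SetLike.coe_set_eq, coe_hutchinson, eq_comm]

lemma lipschitzWith_hutchinson {L : NNReal} (hf : ∀ i, LipschitzWith L (f i)) :
    LipschitzWith L (hutchinson f fun i => (hf i).continuous) := by
  have key : ∀ K K' : NonemptyCompacts X, ∀ z ∈ hutchinson f (fun i => (hf i).continuous) K,
      ∃ w ∈ hutchinson f (fun i => (hf i).continuous) K', dist z w ≤ L * dist K K' := by
    intro K K' z hz
    obtain ⟨i, x, hx, rfl⟩ := mem_hutchinson.1 hz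
    obtain ⟨y, hy, hxy⟩ := K'.isCompact.exists_infDist_eq_dist K'.nonempty x
    refine ⟨f i y, mem_hutchinson.2 ⟨i, y, hy, rfl⟩, ?_⟩
    calc dist (f i x) (f i y) ≤ L * dist x y := (hf i).dist_le_mul x y
      _ ≤ L * dist K K' := by
          rw [← hxy]
          gcongr
          exact infDist_le_hausdorffDist_of_mem hx (edist_ne_top K K')
  refine LipschitzWith.of_dist_le_mul fun K K' => ?_
  exact hausdorffDist_le_of_mem_dist (by positivity) (key K K') fun z hz => by
    obtain ⟨w, hw, hzw⟩ := key K' K z hz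
    exact ⟨w, hw, by rwa [dist_comm K]⟩

lemma isWeakContraction_hutchinson (hf : ∀ i, IsWeakContraction (f i)) :
    IsWeakContraction (hutchinson f fun i => (hf i).lipschitzWith_one.continuous) := by
  have key : ∀ K K' : NonemptyCompacts X, K ≠ K' →
      ∀ z ∈ hutchinson f (fun i => (hf i).lipschitzWith_one.continuous) K,
      infDist z (hutchinson f (fun i => (hf i).lipschitzWith_one.continuous) K') < dist K K' := by
    intro K K' hKK' z hz
    obtain ⟨i, x, hx, rfl⟩ := mem_hutchinson.1 hz
    calc infDist (f i x) (hutchinson f _ K') ≤ infDist (f i x) (f i '' K') :=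
          infDist_le_infDist_of_subset (subset_iUnion (fun j => f j '' (K' : Set X)) i)
            (K'.nonempty.image _)
      _ < dist K K' := (hf i).infDist_image_lt K'.isCompact K'.nonempty (dist_pos.2 hKK')
          (infDist_le_hausdorffDist_of_mem hx (edist_ne_top K K'))
  intro K K' hKK'
  exact hausdorffDist_lt_of_forall_infDist_lt (NonemptyCompacts.isCompact _)
    (NonemptyCompacts.nonempty _) (NonemptyCompacts.isCompact _) (NonemptyCompacts.nonempty _)
    (key K K' hKK') fun z hz => dist_comm K K' ▸ key K' K hKK'.symm z hz

lemma dist_hutchinson_le (hf : ∀ i, Continuous (f i)) (hg : ∀ i, Continuous (g i)) {r : ℝ}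
    (hr : 0 ≤ r) (hfg : ∀ i x, dist (f i x) (g i x) ≤ r) (K : NonemptyCompacts X) :
    dist (hutchinson f hf K) (hutchinson g hg K) ≤ r := by
  refine hausdorffDist_le_of_mem_dist hr (fun z hz => ?_) (fun z hz => ?_)
  · obtain ⟨i, x, hx, rfl⟩ := mem_hutchinson.1 hz
    exact ⟨g i x, mem_hutchinson.2 ⟨i, x, hx, rfl⟩, hfg i x⟩
  · obtain ⟨i, x, hx, rfl⟩ := mem_hutchinson.1 hz
    exact ⟨f i x, mem_hutchinson.2 ⟨i, x, hx, rfl⟩, dist_comm (f i x) _ ▸ hfg i x⟩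

lemma exists_hutchinson_eq_self [CompleteSpace X] [Nonempty X] {L : NNReal} (hL : L < 1)
    (hf : ∀ i, LipschitzWith L (f i)) :
    ∃ K, hutchinson f (fun i => (hf i).continuous) K = K :=
  have hF : ContractingWith L (hutchinson f fun i => (hf i).continuous) :=
    ⟨hL, lipschitzWith_hutchinson hf⟩
  ⟨hF.fixedPoint, hF.fixedPoint_isFixedPt⟩

end Hutchinson

theorem exists_attractor_dist_lt_of_isWeakContraction {X : Type*} [MetricSpace X]
    [CompactSpace X] {ι : Type*} [Finite ι] {f : ι → X → X}
    (hf : ∀ i, IsWeakContraction (f i))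
    {A : NonemptyCompacts X} (hA : (A : Set X) = ⋃ i, f i '' A)
    (happrox : ∀ η > 0, ∃ c : X → X, IsContraction c ∧ ∀ x, dist (c x) x ≤ η)
    {ε : ℝ} (hε : 0 < ε) :
    ∃ g : ι → X → X, (∀ i, IsContraction (g i)) ∧
      ∃ B : NonemptyCompacts X, (B : Set X) = ⋃ i, g i '' B ∧ dist A B < ε := by
  obtain ⟨x, hx⟩ := A.nonempty
  have : Nonempty X := ⟨x⟩
  have : Nonempty ι := ⟨(mem_iUnion.1 (hA ▸ hx)).choose⟩
  set F := hutchinson f fun i => (hf i).lipschitzWith_one.continuous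
  have hFA : Function.IsFixedPt F A := hutchinson_eq_self_iff.2 hA
  obtain ⟨δ, hδ, hnear⟩ := exists_pos_forall_dist_lt_of_dist_apply_lt
    (lipschitzWith_hutchinson fun i => (hf i).lipschitzWith_one).continuous
    (fun K hK => (isWeakContraction_hutchinson hf).eq_of_isFixedPt hK hFA) hε
  obtain ⟨c, ⟨L, hL, hc⟩, hcδ⟩ := happrox (δ / 2) (half_pos hδ)
  have hg : ∀ i, LipschitzWith L (c ∘ f i) := fun i => by
    simpa using hc.comp (hf i).lipschitzWith_one
  obtain ⟨B, hB⟩ := exists_hutchinson_eq_self hL hg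
  refine ⟨fun i => c ∘ f i, fun i => ⟨L, hL, hg i⟩, B, hutchinson_eq_self_iff.1 hB, ?_⟩
  rw [dist_comm]
  refine hnear B ?_
  calc dist B (F B)
      = dist (hutchinson (fun i => c ∘ f i) (fun i => (hg i).continuous) B) (F B) := by
        rw [hB]
    _ ≤ δ / 2 := dist_hutchinson_le _ _ (half_pos hδ).le (fun i x => hcδ (f i x)) B
    _ < δ := half_lt_self hδ

lemma StarConvex.exists_isContraction_dist_le {E : Type*} [NormedAddCommGroup E]
    [NormedSpace ℝ E] {s : Set E} (hs : StarConvex ℝ 0 s) (hb : Bornology.IsBounded s)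
    {η : ℝ} (hη : 0 < η) :
    ∃ c : s → s, IsContraction c ∧ ∀ x, dist (c x) x ≤ η := by
  obtain ⟨R, hR, hxR⟩ := hb.exists_pos_norm_le
  set τ := min (η / R) 1
  have hτ0 : 0 < τ := lt_min (div_pos hη hR) one_pos
  have hτ1 : τ ≤ 1 := min_le_right _ _
  refine ⟨fun x => ⟨(1 - τ) • (x : E), hs.smul_mem x.2 (by linarith) (by linarith)⟩,
    ⟨(1 - τ).toNNReal, ?_, ?_⟩, fun x => ?_⟩
  · rw [Real.toNNReal_lt_one]
    linarith
  · refine LipschitzWith.of_dist_le_mul fun x y => ?_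
    rw [Subtype.dist_eq, Subtype.dist_eq, dist_smul₀, Real.norm_of_nonneg (by linarith),
      Real.coe_toNNReal _ (by linarith)]
  · rw [Subtype.dist_eq]
    calc dist ((1 - τ) • (x : E)) x = τ * ‖(x : E)‖ := by
          rw [dist_eq_norm, sub_smul, one_smul, sub_sub_cancel_left, norm_neg, norm_smul,
            Real.norm_of_nonneg hτ0.le]
      _ ≤ η / R * R :=
          mul_le_mul (min_le_left _ _) (hxR x x.2) (norm_nonneg _) (div_pos hη hR).le
      _ = η := div_mul_cancel₀ η hR.ne'

lemma starConvex_unitCube (d : ℕ) :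
    StarConvex ℝ 0 {x : EuclideanSpace ℝ (Fin d) | ∀ i, x i ∈ Icc (0 : ℝ) 1} :=
  starConvex_zero_iff.2 fun x hx t ht0 ht1 i => by
    simpa using ⟨mul_nonneg ht0 (hx i).1, mul_le_one₀ ht1 (hx i).1 (hx i).2⟩

lemma isCompact_unitCube (d : ℕ) :
    IsCompact {x : EuclideanSpace ℝ (Fin d) | ∀ i, x i ∈ Icc (0 : ℝ) 1} := by
  have : {x : EuclideanSpace ℝ (Fin d) | ∀ i, x i ∈ Icc (0 : ℝ) 1} =
      PiLp.homeomorph 2 _ ⁻¹' univ.pi fun _ => Icc 0 1 :=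
    ext fun _ => mem_univ_pi.symm
  rw [this, Homeomorph.isCompact_preimage]
  exact isCompact_univ_pi fun _ => isCompact_Icc

instance (d : ℕ) : CompactSpace (unitCube d) :=
  isCompact_iff_compactSpace.1 (isCompact_unitCube d)

theorem stmt12_general (n d : ℕ) : wLd n d ⊆ closure (Ld n d) := by
  rintro A ⟨f, hf, hA⟩
  refine Metric.mem_closure_iff.2 fun ε hε => ?_
  obtain ⟨g, hg, B, hB, hAB⟩ := exists_attractor_dist_lt_of_isWeakContraction hf hA
    (fun η hη => (starConvex_unitCube d).exists_isContraction_dist_le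
      (isCompact_unitCube d).isBounded hη) hε
  exact ⟨B, ⟨g, hg, hB⟩, hAB⟩

theorem stmt12 (n d : ℕ) (hn : 0 < n) (hd : 0 < d) :
    wLd n d ⊆ closure (Ld n d) :=
  stmt12_general n d
end
end

section
/- In particular, L_{n+1}^d ⊋ L_n^d and wL_{n+1}^d ⊋ wL_n^d for every n, d ∈ ℕ: the hierarchy of attractors by number of maps is strictly increasing. -/
open Metric Set Topology Filter TopologicalSpace

noncomputable section

/-!
The witness is the set of `n + 1` equally spaced points `k / (n + 1)` on an edge of the cube.
It is the attractor of its `n + 1` constant maps. A weak contraction mapping it into itself sends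
neighbouring points, which realise the minimal distance, to points closer than that distance,
hence to the same point; along the chain of neighbours it is therefore constant on the set, and
`n` constant pieces cover at most `n` points.
-/

theorem IsContraction.isWeakContraction {X : Type*} [MetricSpace X] {f : X → X}
    (hf : IsContraction f) : IsWeakContraction f := by
  obtain ⟨L, hL, hLip⟩ := hf
  intro x y hxy
  calc dist (f x) (f y) ≤ L * dist x y := hLip.dist_le_mul x y
    _ < 1 * dist x y := mul_lt_mul_of_pos_right (by exact_mod_cast hL) (dist_pos.2 hxy)
    _ = dist x y := one_mul _

theorem isContraction_const {X : Type*} [MetricSpace X] (c : X) :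
    IsContraction fun _ : X => c :=
  ⟨0, zero_lt_one, LipschitzWith.const c⟩

theorem exists_fin_succ_of_eq_iUnion_image {X : Type*} {P : (X → X) → Prop} {A : Set X}
    (hA : A.Nonempty) {n : ℕ} {f : Fin n → X → X} (hf : ∀ i, P (f i))
    (hU : A = ⋃ i, f i '' A) : ∃ g : Fin (n + 1) → X → X, (∀ i, P (g i)) ∧ A = ⋃ i, g i '' A := by
  obtain ⟨i₀⟩ : Nonempty (Fin n) := by
    obtain ⟨x, hx⟩ := hA
    rw [hU, mem_iUnion] at hx
    exact ⟨hx.choose⟩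
  refine ⟨fun i => f (i₀.predAbove i), fun i => hf _, ?_⟩
  rw [(Fin.predAbove_surjective i₀).iUnion_comp fun j => f j '' A]
  exact hU

theorem range_eq_iUnion_image_const {X ι : Type*} [Nonempty ι] (p : ι → X) :
    range p = ⋃ i, (fun _ : X => p i) '' range p := by
  simp only [(range_nonempty p).image_const, iUnion_singleton_eq_range]

section WeakContraction

variable {X : Type*} [MetricSpace X] {f : X → X} {S : Set X} {δ : ℝ}

theorem IsWeakContraction.apply_eq_of_dist_le (hf : IsWeakContraction f)
    (hsep : ∀ x ∈ S, ∀ y ∈ S, x ≠ y → δ ≤ dist x y) (hmaps : MapsTo f S S)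
    {x y : X} (hx : x ∈ S) (hy : y ∈ S) (hxy : dist x y ≤ δ) : f x = f y := by
  by_contra hne
  -- the images would be `δ`-separated and yet closer than `δ`
  have hxy' : x ≠ y := fun h => hne (congrArg f h)
  have hlt : dist (f x) (f y) < δ := (hf x y hxy').trans_le hxy
  exact (hsep _ (hmaps hx) _ (hmaps hy) hne).not_gt hlt

theorem IsWeakContraction.apply_eq_apply_zero_of_chain (hf : IsWeakContraction f) {m : ℕ}
    {p : Fin (m + 1) → X} (hsep : ∀ x ∈ range p, ∀ y ∈ range p, x ≠ y → δ ≤ dist x y)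
    (hstep : ∀ i : Fin m, dist (p i.castSucc) (p i.succ) ≤ δ)
    (hmaps : MapsTo f (range p) (range p))
    (i : Fin (m + 1)) : f (p i) = f (p 0) := by
  induction i using Fin.induction with
  | zero => rfl
  | succ i ih =>
    rw [← ih]
    exact (hf.apply_eq_of_dist_le hsep hmaps (mem_range_self _) (mem_range_self _) (hstep i)).symm

end WeakContraction

theorem range_ne_iUnion_image_of_isWeakContraction {X : Type*} [MetricSpace X] {m : ℕ} {δ : ℝ}
    {p : Fin (m + 1) → X} (hp : ∀ i j, dist (p i) (p j) = δ * |(i : ℝ) - j|) (hδ : 0 < δ)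
    (f : Fin m → X → X) (hf : ∀ i, IsWeakContraction (f i)) :
    range p ≠ ⋃ i, f i '' range p := by
  intro hU
  have hp_inj : Function.Injective p := fun i j hij => by
    have h := hp i j
    rw [hij, dist_self, eq_comm, mul_eq_zero, abs_eq_zero, sub_eq_zero] at h
    exact Fin.ext (by exact_mod_cast h.resolve_left hδ.ne')
  have hsep : ∀ x ∈ range p, ∀ y ∈ range p, x ≠ y → δ ≤ dist x y := by
    rintro _ ⟨i, rfl⟩ _ ⟨j, rfl⟩ hij
    have hij : (i : ℤ) ≠ j := fun h => hij (congrArg p (Fin.ext (by exact_mod_cast h)))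
    have h1 : (1 : ℝ) ≤ |(i : ℝ) - j| := by exact_mod_cast Int.one_le_abs (sub_ne_zero.2 hij)
    rw [hp]
    exact le_mul_of_one_le_right hδ.le h1
  have hstep : ∀ i : Fin m, dist (p i.castSucc) (p i.succ) ≤ δ := fun i => by
    simp [hp]
  have hconst : ∀ k j, f k (p j) = f k (p 0) := fun k =>
    (hf k).apply_eq_apply_zero_of_chain hsep hstep
      fun x hx => hU ▸ mem_iUnion_of_mem k ⟨x, hx, rfl⟩
  have hcover : ∀ j, ∃ k, p j = f k (p 0) := fun j => by
    have hj : p j ∈ ⋃ k, f k '' range p := hU ▸ mem_range_self j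
    obtain ⟨k, _, ⟨i, rfl⟩, hk⟩ := mem_iUnion.1 hj
    exact ⟨k, by rw [← hk, hconst]⟩
  choose F hF using hcover
  have hF_inj : Function.Injective F := fun j j' h => hp_inj (by rw [hF j, hF j', h])
  simpa using Fintype.card_le_of_injective F hF_inj

section UnitCube

variable {d : ℕ}

def axisPoint (i : Fin d) (t : Icc (0 : ℝ) 1) : unitCube d :=
  ⟨EuclideanSpace.single i (t : ℝ), fun j => by
    rw [PiLp.single_apply]
    split_ifs
    exacts [t.2, ⟨le_rfl, zero_le_one⟩]⟩

theorem isometry_axisPoint (i : Fin d) : Isometry (axisPoint i) :=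
  Isometry.of_dist_eq fun s t => by simp [axisPoint, Subtype.dist_eq]

def unitGrid (m : ℕ) (k : Fin (m + 1)) : Icc (0 : ℝ) 1 :=
  ⟨k / (m + 1), by positivity, div_le_one_of_le₀ (by norm_cast; omega) (by positivity)⟩

theorem dist_unitGrid (m : ℕ) (i j : Fin (m + 1)) :
    dist (unitGrid m i) (unitGrid m j) = (m + 1 : ℝ)⁻¹ * |(i : ℝ) - j| := by
  rw [Subtype.dist_eq, Real.dist_eq, unitGrid, unitGrid, ← sub_div, abs_div,
    abs_of_pos (by positivity : (0 : ℝ) < m + 1), div_eq_inv_mul]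

def gridAttractor (hd : 0 < d) (m : ℕ) : NonemptyCompacts (unitCube d) :=
  ⟨⟨range (axisPoint ⟨0, hd⟩ ∘ unitGrid m), (finite_range _).isCompact⟩, range_nonempty _⟩

theorem gridAttractor_mem_Ld (hd : 0 < d) (m : ℕ) : gridAttractor hd m ∈ Ld (m + 1) d :=
  ⟨fun i _ => axisPoint ⟨0, hd⟩ (unitGrid m i), fun _ => isContraction_const _,
    range_eq_iUnion_image_const _⟩

theorem gridAttractor_notMem_wLd (hd : 0 < d) (m : ℕ) : gridAttractor hd m ∉ wLd m d := by
  rintro ⟨f, hf, hU⟩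
  refine range_ne_iUnion_image_of_isWeakContraction (fun i j => ?_)
    (inv_pos.2 m.cast_add_one_pos) f hf hU
  rw [Function.comp_apply, Function.comp_apply, (isometry_axisPoint _).dist_eq, dist_unitGrid]

theorem Ld_subset_wLd (n : ℕ) : Ld n d ⊆ wLd n d := fun _ ⟨f, hf, hU⟩ =>
  ⟨f, fun i => (hf i).isWeakContraction, hU⟩

theorem Ld_subset_Ld_succ (n : ℕ) : Ld n d ⊆ Ld (n + 1) d := fun A ⟨_, hf, hU⟩ =>
  exists_fin_succ_of_eq_iUnion_image A.nonempty hf hU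

theorem wLd_subset_wLd_succ (n : ℕ) : wLd n d ⊆ wLd (n + 1) d := fun A ⟨_, hf, hU⟩ =>
  exists_fin_succ_of_eq_iUnion_image A.nonempty hf hU

end UnitCube

theorem stmt14_general (n d : ℕ) (hd : 0 < d) :
    Ld n d ⊂ Ld (n + 1) d ∧ wLd n d ⊂ wLd (n + 1) d := by
  have hA : gridAttractor hd n ∉ wLd n d := gridAttractor_notMem_wLd hd n
  exact ⟨⟨Ld_subset_Ld_succ n, fun h => hA (Ld_subset_wLd n (h (gridAttractor_mem_Ld hd n)))⟩,
    ⟨wLd_subset_wLd_succ n, fun h => hA (h (Ld_subset_wLd _ (gridAttractor_mem_Ld hd n)))⟩⟩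

theorem stmt14 (n d : ℕ) (hn : 0 < n) (hd : 0 < d) :
    Ld n d ⊂ Ld (n + 1) d ∧ wLd n d ⊂ wLd (n + 1) d :=
  stmt14_general n d hd
end
end
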